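/- In the braid group B_4, the word σ1 σ1 σ2⁻¹ σ1 σ1 σ3 σ2 σ1⁻¹ σ2 σ3 σ3 (a braid representative of the knot 11n144) equals the product of the positive bands of its band decomposition with band centers {1, 2, 4, 6, 7, 10, 11}; in particular, this braid is quasipositive. -/

import Mathlib

/-- The Artin relations for the braid group with `m` generators
`σ_1, …, σ_m` (indexed by `Fin m`), i.e. the braid group `B_{m+1}`:
`σ_i σ_j = σ_j σ_i` for `|i - j| ≥ 2`, and
`σ_i σ_{i+1} σ_i = σ_{i+1} σ_i σ_{i+1}`. -/
def braidRels (m : ℕ) : Set (FreeGroup (Fin m)) :=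
  { r | (∃ i j : Fin m, (i : ℕ) + 2 ≤ (j : ℕ) ∧
          r = FreeGroup.of i * FreeGroup.of j * (FreeGroup.of i)⁻¹ * (FreeGroup.of j)⁻¹) ∨
        (∃ i j : Fin m, (i : ℕ) + 1 = (j : ℕ) ∧
          r = FreeGroup.of i * FreeGroup.of j * FreeGroup.of i *
              (FreeGroup.of j)⁻¹ * (FreeGroup.of i)⁻¹ * (FreeGroup.of j)⁻¹) }

/-- The braid group `B_{m+1}`, presented with `m` Artin generators.
Here index `i : Fin m` corresponds to the Artin generator `σ_{i+1}`. -/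
abbrev BraidGrp (m : ℕ) := PresentedGroup (braidRels m)

/-- The Artin generator `σ_{i+1}` of the braid group `B_{m+1}`. -/
def σ {m : ℕ} (i : Fin m) : BraidGrp m := PresentedGroup.of i

/-- A letter of a braid word: a generator index together with a sign
(`true` = the positive generator, `false` = its inverse). -/
abbrev Letter (m : ℕ) := Fin m × Bool

/-- The group element represented by a letter. -/
def letterEl {m : ℕ} (x : Letter m) : BraidGrp m :=
  if x.2 then σ x.1 else (σ x.1)⁻¹

/-- The group element represented by a braid word. -/
def wordProd {m : ℕ} (w : List (Letter m)) : BraidGrp m :=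
  (w.map letterEl).prod

/-- The band of the band decomposition of the word `w` with band centers `S`
(1-based positions) at center `p`: namely `α_p * x_p * α_p⁻¹`, where `x_p` is
the letter of `w` at position `p` and `α_p` is the product, in increasing
order of position, of the letters of `w` at positions `q < p` with `q ∉ S`. -/
def band {m : ℕ} (w : List (Letter m)) (S : List ℕ) (p : ℕ) : BraidGrp m :=
  let α : BraidGrp m :=
    wordProd (((w.zipIdx.map Prod.swap).filter
    fun qx => decide (qx.1 + 1 < p ∧ qx.1 + 1 ∉ S)).map Prod.snd)
  match w[p - 1]? with
  | some x => α * letterEl x * α⁻¹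
  | none => 1

/-- The product, in increasing order of band center, of the bands of the
band decomposition of the word `w` with band centers `S`. -/
def bandProd {m : ℕ} (w : List (Letter m)) (S : List ℕ) : BraidGrp m :=
  (S.map (band w S)).prod

/-- A positive band in the braid group: a conjugate `α σ_j α⁻¹` of a generator. -/
def IsPositiveBand {m : ℕ} (x : BraidGrp m) : Prop :=
  ∃ (α : BraidGrp m) (j : Fin m), x = α * σ j * α⁻¹

/-- A braid is quasipositive if it is a product of positive bands. -/
def IsQuasipositive {m : ℕ} (x : BraidGrp m) : Prop :=
  ∃ l : List (BraidGrp m), (∀ b ∈ l, IsPositiveBand b) ∧ x = l.prod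

/-- A negative band in the braid group: a conjugate `α σ_j⁻¹ α⁻¹` of the
inverse of a generator. -/
def IsNegativeBand {m : ℕ} (x : BraidGrp m) : Prop :=
  ∃ (α : BraidGrp m) (j : Fin m), x = α * (σ j)⁻¹ * α⁻¹

/-- A braid is quasinegative if it is a product of negative bands. -/
def IsQuasinegative {m : ℕ} (x : BraidGrp m) : Prop :=
  ∃ l : List (BraidGrp m), (∀ b ∈ l, IsNegativeBand b) ∧ x = l.prod

/-- The braid word for the knot `11n144` (letter `(i, true)` is `σ_(i+1)`,
`(i, false)` is `σ_(i+1)⁻¹`). -/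
def theWord : List (Letter 3) :=
  [(0, true), (0, true), (1, false), (0, true), (0, true), (2, true), (1, true), (0, false), (1, true), (2, true), (2, true)]

/-- The band centers. -/
def theCenters : List ℕ := [1, 2, 4, 6, 7, 10, 11]

/-! Write `α_p` (`bandConj w S p`) for the product of the non-center letters before
position `p`. Consecutive bands telescope: if `p < p'` are consecutive centers, then
`α_p x_p α_p⁻¹ · α_p'` is `α_p x_p` followed by the non-center letters strictly between
`p` and `p'`. Hence `w = (∏ bands) · α_end` for every band decomposition, where `α_end` is
the product of all non-center letters. For the word of `11n144` these are
`σ₂⁻¹ σ₁ σ₁⁻¹ σ₂`, which cancel freely, and every center carries a positive letter. -/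

section BandDecomposition

variable {m : ℕ}

def bandConj (w : List (Letter m)) (S : List ℕ) (p : ℕ) : BraidGrp m :=
  wordProd (((w.zipIdx.map Prod.swap).filter
    fun qx => decide (qx.1 + 1 < p ∧ qx.1 + 1 ∉ S)).map Prod.snd)

theorem wordProd_append (v w : List (Letter m)) : wordProd (v ++ w) = wordProd v * wordProd w := by
  simp [wordProd]

theorem band_of_getElem? {w : List (Letter m)} {S : List ℕ} {p : ℕ} {x : Letter m}
    (h : w[p - 1]? = some x) :
    band w S p = bandConj w S p * letterEl x * (bandConj w S p)⁻¹ := by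
  simp only [band, h, bandConj]

theorem bandConj_append_singleton (w : List (Letter m)) (x : Letter m) (S : List ℕ) (p : ℕ) :
    bandConj (w ++ [x]) S p =
      bandConj w S p * if w.length + 1 < p ∧ w.length + 1 ∉ S then letterEl x else 1 := by
  by_cases h : w.length + 1 < p ∧ w.length + 1 ∉ S <;>
    simp [bandConj, List.zipIdx_append, h, wordProd]

theorem bandConj_eq_of_length_lt {w : List (Letter m)} (S : List ℕ) {p q : ℕ}
    (hp : w.length < p) (hq : w.length < q) : bandConj w S p = bandConj w S q := by
  unfold bandConj
  congr 2
  refine List.filter_congr fun ⟨i, x⟩ hi => ?_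
  have := (List.mem_zipIdx' ((List.mem_map_swap _ _ _).mp hi)).1
  simp only [show i + 1 < p by omega, show i + 1 < q by omega, true_and]

theorem band_append_singleton_of_le {w : List (Letter m)} (x : Letter m) (S : List ℕ) {p : ℕ}
    (hp₀ : p ≠ 0) (hp : p ≤ w.length) : band (w ++ [x]) S p = band w S p := by
  have hconj : bandConj (w ++ [x]) S p = bandConj w S p := by
    rw [bandConj_append_singleton, if_neg (by omega), mul_one]
  have hget : (w ++ [x])[p - 1]? = w[p - 1]? := List.getElem?_append_left (by omega)
  cases hw : w[p - 1]? with
  | none => simp only [band, hget, hw]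
  | some y => rw [band_of_getElem? (hget.trans hw), band_of_getElem? hw, hconj]

theorem filter_le_succ_of_pairwise_lt {S : List ℕ} (hS : S.Pairwise (· < ·)) (n : ℕ) :
    S.filter (· ≤ n + 1) = S.filter (· ≤ n) ++ if n + 1 ∈ S then [n + 1] else [] := by
  induction S with
  | nil => simp
  | cons a S ih =>
    rw [List.pairwise_cons] at hS
    obtain ⟨ha, hS⟩ := hS
    by_cases han : a ≤ n
    · simp [han, ih hS, show a ≤ n + 1 by omega, show n + 1 ≠ a by omega]
    · have hbig : ∀ b ∈ S, n + 1 < b := fun b hb => by have := ha b hb; omega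
      have h1 : S.filter (· ≤ n + 1) = [] := List.filter_eq_nil_iff.mpr fun b hb => by
        simpa using hbig b hb
      have h0 : S.filter (· ≤ n) = [] := List.filter_eq_nil_iff.mpr fun b hb => by
        simpa using (hbig b hb).trans' (Nat.lt_succ_self n)
      have hn : n + 1 ∉ S := fun h => by have := hbig _ h; omega
      by_cases ha' : a = n + 1
      · subst ha'; simp [h1, h0, han]
      · simp [h1, h0, han, hn, Ne.symm ha', show ¬ a ≤ n + 1 by omega]

theorem wordProd_eq_prod_band_mul_bandConj {S : List ℕ} (hS : S.Pairwise (· < ·))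
    (hS₀ : 0 ∉ S) (w : List (Letter m)) :
    wordProd w =
      ((S.filter (· ≤ w.length)).map (band w S)).prod * bandConj w S (w.length + 1) := by
  induction w using List.reverseRecOn with
  | nil =>
    have : S.filter (· ≤ 0) = [] := List.filter_eq_nil_iff.mpr fun p hp h => by
      simp only [nonpos_iff_eq_zero, decide_eq_true_eq] at h
      exact hS₀ (h ▸ hp)
    rw [List.length_nil, this]
    simp [wordProd, bandConj]
  | append_singleton w x ih =>
    have hbands : (S.filter (· ≤ w.length)).map (band (w ++ [x]) S) =
        (S.filter (· ≤ w.length)).map (band w S) :=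
      List.map_congr_left fun p hp => by
        rw [List.mem_filter, decide_eq_true_iff] at hp
        exact band_append_singleton_of_le x S (fun h => hS₀ (h ▸ hp.1)) hp.2
    have hconj_end : bandConj (w ++ [x]) S (w.length + 1 + 1) =
        bandConj w S (w.length + 1) * if w.length + 1 ∈ S then 1 else letterEl x := by
      rw [bandConj_append_singleton,
        bandConj_eq_of_length_lt S (q := w.length + 1) (by omega) (by omega)]
      by_cases hn : w.length + 1 ∈ S <;> simp [hn]
    rw [List.length_append, List.length_singleton, filter_le_succ_of_pairwise_lt hS,
      List.map_append, List.prod_append, hbands, wordProd_append, ih, hconj_end]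
    by_cases hn : w.length + 1 ∈ S
    · have hconj_last : bandConj (w ++ [x]) S (w.length + 1) = bandConj w S (w.length + 1) := by
        rw [bandConj_append_singleton, if_neg (by omega), mul_one]
      rw [if_pos hn, if_pos hn, List.map_singleton, List.prod_singleton,
        band_of_getElem? (x := x) (by simp), hconj_last]
      simp only [wordProd, List.map_singleton, List.prod_singleton]
      group
    · simp [hn, wordProd, mul_assoc]

theorem wordProd_eq_bandProd_mul_bandConj {w : List (Letter m)} {S : List ℕ}
    (hS : S.Pairwise (· < ·)) (hS_mem : ∀ p ∈ S, p ≠ 0 ∧ p ≤ w.length) :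
    wordProd w = bandProd w S * bandConj w S (w.length + 1) := by
  rw [wordProd_eq_prod_band_mul_bandConj hS (fun h => (hS_mem 0 h).1 rfl) w,
    List.filter_eq_self.mpr fun p hp => decide_eq_true (hS_mem p hp).2]
  rfl

theorem isQuasipositive_bandProd {w : List (Letter m)} {S : List ℕ}
    (hS : ∀ p ∈ S, ∃ j, w[p - 1]? = some (j, true)) : IsQuasipositive (bandProd w S) := by
  refine ⟨S.map (band w S), fun b hb => ?_, rfl⟩
  obtain ⟨p, hp, rfl⟩ := List.mem_map.mp hb
  obtain ⟨j, hj⟩ := hS p hp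
  exact ⟨bandConj w S p, j, band_of_getElem? hj⟩

end BandDecomposition

/-- The braid representative of `11n144` equals the product of the bands of its
band decomposition with the given band centers; in particular it is quasipositive. -/
theorem knot_11n144_quasipositive :
    wordProd theWord = bandProd theWord theCenters ∧
      IsQuasipositive (wordProd theWord) := by
  have hconj : bandConj theWord theCenters (theWord.length + 1) = 1 := by
    simp [bandConj, theWord, theCenters, wordProd, letterEl, List.zipIdx]
  have heq : wordProd theWord = bandProd theWord theCenters := by
    rw [wordProd_eq_bandProd_mul_bandConj (S := theCenters) (by decide) (by decide), hconj,
      mul_one]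
  exact ⟨heq, heq ▸ isQuasipositive_bandProd (by decide)⟩
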